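/- arXiv:1404.5055 — 3 statements merged into one kernel-verified Lean document; each statement's English description precedes it below -/
import Mathlib

section
/- Any n-letter jamming strategy satisfying the average cost constraint n·P_J achieves average per-letter distortion at most D(P_J). That is, if the jammer's (possibly correlated, possibly randomized) conditional distribution p_{J^n|X^n} satisfies Σ_{i=1}^n E[ρ(J_i|X_i)] ≤ n·P_J, then (1/n)Σ_{i=1}^n E[d(S_i,Ŝ_i)] ≤ D(P_J). -/
open Finset

/-- A (row-stochastic) probability kernel from `A` to `B`. -/
def IsKernel {A B : Type*} [Fintype B] (q : A → B → ℝ) : Prop :=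
  (∀ a b, 0 ≤ q a b) ∧ ∀ a, ∑ b, q a b = 1

/-- A probability mass function on `A`. -/
def IsPMF {A : Type*} [Fintype A] (p : A → ℝ) : Prop :=
  (∀ a, 0 ≤ p a) ∧ ∑ a, p a = 1

section Defs

variable {S X J Y Sh : Type*} [Fintype S] [Fintype X] [Fintype J] [Fintype Y] [Fintype Sh]

/-- Expected distortion of a single-letter jamming kernel `q` under the joint law
`p_S p_{X|S} q p_{Y|X,J} p_{Ŝ|Y}`. -/
def Edist (pS : S → ℝ) (pXS : S → X → ℝ) (ch : X → J → Y → ℝ) (dec : Y → Sh → ℝ)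
    (d : S → Sh → ℝ) (q : X → J → ℝ) : ℝ :=
  ∑ s, ∑ x, ∑ j, ∑ y, ∑ sh,
    pS s * pXS s x * q x j * ch x j y * dec y sh * d s sh

/-- Expected jammer cost of a single-letter jamming kernel `q`. -/
def Ecost (pS : S → ℝ) (pXS : S → X → ℝ) (ρ : J → X → ℝ) (q : X → J → ℝ) : ℝ :=
  ∑ s, ∑ x, ∑ j, pS s * pXS s x * q x j * ρ j x

/-- The jammer's distortion cost function `D(P_J)`: the supremum of expected distortions
over all single-letter jamming kernels of expected cost at most `P`. -/
noncomputable def Dfun (pS : S → ℝ) (pXS : S → X → ℝ) (ch : X → J → Y → ℝ)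
    (dec : Y → Sh → ℝ) (d : S → Sh → ℝ) (ρ : J → X → ℝ) (P : ℝ) : ℝ :=
  sSup {D | ∃ q : X → J → ℝ, IsKernel q ∧ Ecost pS pXS ρ q ≤ P ∧
    Edist pS pXS ch dec d q = D}

end Defs

section Multiletter

variable {S X J Y Sh : Type*} [Fintype S] [Fintype X] [Fintype J] [Fintype Y] [Fintype Sh]

/-- Joint probability of the `n`-letter tuple `(s^n, x^n, j^n, y^n, ŝ^n)` when the source
is i.i.d. `p_S`, the user applies the single-letter strategy `(p_{X|S}, p_{Ŝ|Y})`
memorylessly, the channel is memoryless, and the jammer uses an arbitrary (possibly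
correlated, possibly randomized) strategy `Pn : X^n → dist(J^n)`. -/
def jointProb (pS : S → ℝ) (pXS : S → X → ℝ) (ch : X → J → Y → ℝ) (dec : Y → Sh → ℝ)
    {n : ℕ} (Pn : (Fin n → X) → (Fin n → J) → ℝ)
    (sv : Fin n → S) (xv : Fin n → X) (jv : Fin n → J) (yv : Fin n → Y)
    (shv : Fin n → Sh) : ℝ :=
  (∏ i, pS (sv i) * pXS (sv i) (xv i)) * Pn xv jv *
    ∏ i, ch (xv i) (jv i) (yv i) * dec (yv i) (shv i)

/-- The expected distortion `E[d(S_i, Ŝ_i)]` at position `i`. -/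
def EdistI (pS : S → ℝ) (pXS : S → X → ℝ) (ch : X → J → Y → ℝ) (dec : Y → Sh → ℝ)
    (d : S → Sh → ℝ) {n : ℕ} (Pn : (Fin n → X) → (Fin n → J) → ℝ) (i : Fin n) : ℝ :=
  ∑ sv : Fin n → S, ∑ xv : Fin n → X, ∑ jv : Fin n → J, ∑ yv : Fin n → Y,
    ∑ shv : Fin n → Sh,
      jointProb pS pXS ch dec Pn sv xv jv yv shv * d (sv i) (shv i)

/-- The expected jammer cost `E[ρ(J_i|X_i)]` at position `i`. -/
def EcostI (pS : S → ℝ) (pXS : S → X → ℝ) (ρ : J → X → ℝ)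
    {n : ℕ} (Pn : (Fin n → X) → (Fin n → J) → ℝ) (i : Fin n) : ℝ :=
  ∑ sv : Fin n → S, ∑ xv : Fin n → X, ∑ jv : Fin n → J,
    (∏ k, pS (sv k) * pXS (sv k) (xv k)) * Pn xv jv * ρ (jv i) (xv i)

end Multiletter

/-!
Letter `i` of an `n`-letter jamming strategy induces the single-letter kernel
`qᵢ(j | x) = P(Jᵢ = j | Xᵢ = x)`. Source, encoder, channel and decoder all act letterwise, so
`qᵢ` has exactly the expected distortion and cost of letter `i`. Both quantities are linear in
the kernel, so the mean kernel `(1/n) ∑ qᵢ` achieves the average distortion at the average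
cost; the latter is at most `P_J`, hence the former is at most `D(P_J)`.
-/

open Function

section ProductSums

variable {ι X R : Type*} [Fintype ι] [DecidableEq ι] [Fintype X] [CommSemiring R]

theorem sum_prod_erase_mul_apply (f : ι → X → R) (i : ι) (w : X → R) :
    ∑ xv : ι → X, (∏ k ∈ univ.erase i, f k (xv k)) * w (xv i) =
      (∑ x, w x) * ∏ k ∈ univ.erase i, ∑ x, f k x := by
  set g := update f i w
  have hgi : g i = w := update_self ..
  have hg : ∀ k ∈ univ.erase i, g k = f k := fun k hk => update_of_ne (ne_of_mem_erase hk) _ _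
  have hprod (xv : ι → X) : ∏ k, g k (xv k) = (∏ k ∈ univ.erase i, f k (xv k)) * w (xv i) := by
    rw [← mul_prod_erase univ _ (mem_univ i), prod_congr rfl fun k hk => congrFun (hg k hk) (xv k),
      hgi, mul_comm]
  have hsum : ∏ k, ∑ x, g k x = (∑ x, w x) * ∏ k ∈ univ.erase i, ∑ x, f k x := by
    rw [← mul_prod_erase univ _ (mem_univ i), prod_congr rfl fun k hk => by rw [hg k hk], hgi]
  simp only [← hprod, ← hsum, Fintype.prod_sum]

theorem sum_prod_mul_apply (f : ι → X → R) (i : ι) (w : X → R) :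
    ∑ xv : ι → X, (∏ k, f k (xv k)) * w (xv i) =
      (∑ x, f i x * w x) * ∏ k ∈ univ.erase i, ∑ x, f k x := by
  rw [← sum_prod_erase_mul_apply]
  refine sum_congr rfl fun xv _ => ?_
  rw [← mul_prod_erase univ _ (mem_univ i)]
  ring

theorem sum_prod_mul_apply_of_sum_eq_one (f : ι → X → R) (hf : ∀ k, ∑ x, f k x = 1)
    (i : ι) (w : X → R) :
    ∑ xv : ι → X, (∏ k, f k (xv k)) * w (xv i) = ∑ x, f i x * w x := by
  simp only [sum_prod_mul_apply, hf, prod_const_one, mul_one]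

theorem sum_sum_pi_eq_sum_pi_prod {Z : Type*} [Fintype Z] (F : (ι → X) → (ι → Z) → R) :
    ∑ xv : ι → X, ∑ zv : ι → Z, F xv zv =
      ∑ p : ι → X × Z, F (fun k => (p k).1) (fun k => (p k).2) := by
  rw [← Fintype.sum_prod_type']
  exact (Equiv.sum_comp (Equiv.arrowProdEquivProdArrow ι (fun _ => X) (fun _ => Z)) _).symm

end ProductSums

section Kernels

variable {ι A B : Type*} [Fintype ι] [Fintype B]

theorem IsKernel.le_one {q : A → B → ℝ} (hq : IsKernel q) (a : A) (b : B) : q a b ≤ 1 :=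
  (hq.2 a).le.trans' (single_le_sum (fun b _ => hq.1 a b) (mem_univ b))

noncomputable def meanKernel (q : ι → A → B → ℝ) : A → B → ℝ :=
  fun a b => (Fintype.card ι : ℝ)⁻¹ * ∑ i, q i a b

theorem IsKernel.meanKernel [Nonempty ι] {q : ι → A → B → ℝ} (hq : ∀ i, IsKernel (q i)) :
    IsKernel (meanKernel q) := by
  refine ⟨fun a b => mul_nonneg (by positivity) (sum_nonneg fun i _ => (hq i).1 a b), fun a => ?_⟩
  simp only [_root_.meanKernel, ← mul_sum]
  rw [sum_comm]
  simp [(hq _).2]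

theorem sum_meanKernel_mul [Fintype A] (q : ι → A → B → ℝ) (F : A → B → ℝ) :
    ∑ a, ∑ b, meanKernel q a b * F a b =
      (Fintype.card ι : ℝ)⁻¹ * ∑ i, ∑ a, ∑ b, q i a b * F a b := by
  simp only [meanKernel, mul_sum, sum_mul, mul_assoc]
  rw [sum_comm_cycle]

end Kernels

section Jamming

variable {S X J Y Sh : Type*} [Fintype Y] [Fintype Sh] (pS : S → ℝ) (pXS : S → X → ℝ)
  (ch : X → J → Y → ℝ) (dec : Y → Sh → ℝ) (d : S → Sh → ℝ) (ρ : J → X → ℝ)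

def letterDistortion (s : S) (x : X) (j : J) : ℝ := ∑ y, ∑ sh, ch x j y * dec y sh * d s sh

theorem sum_outputs_eq_letterDistortion (hch : ∀ x, IsKernel (ch x)) (hdec : IsKernel dec)
    {n : ℕ} (s : S) (xv : Fin n → X) (jv : Fin n → J) (i : Fin n) :
    ∑ yv : Fin n → Y, ∑ shv : Fin n → Sh,
        (∏ k, ch (xv k) (jv k) (yv k) * dec (yv k) (shv k)) * d s (shv i) =
      letterDistortion ch dec d s (xv i) (jv i) := by
  rw [sum_sum_pi_eq_sum_pi_prod fun yv shv =>
      (∏ k, ch (xv k) (jv k) (yv k) * dec (yv k) (shv k)) * d s (shv i),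
    sum_prod_mul_apply_of_sum_eq_one (fun k (p : Y × Sh) => ch (xv k) (jv k) p.1 * dec p.1 p.2)
      _ i fun p => d s p.2]
  · simp [letterDistortion, Fintype.sum_prod_type]
  · intro k
    simp [Fintype.sum_prod_type, ← mul_sum, hdec.2, (hch _).2]

variable [Fintype S] [Fintype X] [Fintype J]

def marginalX (x : X) : ℝ := ∑ s, pS s * pXS s x

theorem isPMF_marginalX (hpS : IsPMF pS) (hpXS : IsKernel pXS) : IsPMF (marginalX pS pXS) := by
  refine ⟨fun x => sum_nonneg fun s _ => mul_nonneg (hpS.1 s) (hpXS.1 s x), ?_⟩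
  simp only [marginalX]
  rw [sum_comm]
  simp [← mul_sum, hpXS.2, hpS.2]

def distortionWeight (x : X) (j : J) : ℝ :=
  ∑ s, pS s * pXS s x * letterDistortion ch dec d s x j

theorem Ecost_eq_sum_mul (q : X → J → ℝ) :
    Ecost pS pXS ρ q = ∑ x, ∑ j, q x j * (marginalX pS pXS x * ρ j x) := by
  simp only [Ecost, marginalX, sum_mul, mul_sum]
  rw [sum_comm]
  refine sum_congr rfl fun x _ => ?_
  rw [sum_comm]
  exact sum_congr rfl fun j _ => sum_congr rfl fun s _ => by ring

theorem Edist_eq_sum_mul (q : X → J → ℝ) :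
    Edist pS pXS ch dec d q = ∑ x, ∑ j, q x j * distortionWeight pS pXS ch dec d x j := by
  simp only [Edist, distortionWeight, letterDistortion, mul_sum]
  rw [sum_comm]
  refine sum_congr rfl fun x _ => ?_
  rw [sum_comm]
  exact sum_congr rfl fun j _ => sum_congr rfl fun s _ => sum_congr rfl fun y _ =>
    sum_congr rfl fun sh _ => by ring

theorem Ecost_meanKernel {ι : Type*} [Fintype ι] (q : ι → X → J → ℝ) :
    Ecost pS pXS ρ (meanKernel q) = (Fintype.card ι : ℝ)⁻¹ * ∑ i, Ecost pS pXS ρ (q i) := by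
  simp only [Ecost_eq_sum_mul, sum_meanKernel_mul]

theorem Edist_meanKernel {ι : Type*} [Fintype ι] (q : ι → X → J → ℝ) :
    Edist pS pXS ch dec d (meanKernel q) =
      (Fintype.card ι : ℝ)⁻¹ * ∑ i, Edist pS pXS ch dec d (q i) := by
  simp only [Edist_eq_sum_mul, sum_meanKernel_mul]

theorem Edist_le_Dfun {q : X → J → ℝ} (hq : IsKernel q) {P : ℝ} (hP : Ecost pS pXS ρ q ≤ P) :
    Edist pS pXS ch dec d q ≤ Dfun pS pXS ch dec d ρ P := by
  -- `Dfun` is an `sSup` in `ℝ`, which is junk unless the feasible distortions are bounded above.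
  refine le_csSup ⟨∑ x, ∑ j, |distortionWeight pS pXS ch dec d x j|, ?_⟩ ⟨q, hq, hP, rfl⟩
  rintro _ ⟨q', hq', -, rfl⟩
  rw [Edist_eq_sum_mul]
  refine sum_le_sum fun x _ => sum_le_sum fun j _ => ?_
  calc q' x j * distortionWeight pS pXS ch dec d x j
      ≤ q' x j * |distortionWeight pS pXS ch dec d x j| :=
        mul_le_mul_of_nonneg_left (le_abs_self _) (hq'.1 x j)
    _ ≤ |distortionWeight pS pXS ch dec d x j| :=
        mul_le_of_le_one_left (abs_nonneg _) (hq'.le_one x j)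

variable {n : ℕ} (Pn : (Fin n → X) → (Fin n → J) → ℝ)

/-- `P(J_i = j | X_i = x)`: the letters of `X^n` are i.i.d. with law `marginalX`, so conditioning
on `X_i = x` leaves the product of the marginals of the other letters. -/
def inducedKernel [DecidableEq X] [DecidableEq J] (i : Fin n) (x : X) (j : J) : ℝ :=
  ∑ xv : Fin n → X, ∑ jv : Fin n → J,
    if xv i = x ∧ jv i = j then (∏ k ∈ univ.erase i, marginalX pS pXS (xv k)) * Pn xv jv else 0

theorem sum_inducedKernel_mul [DecidableEq X] [DecidableEq J] (i : Fin n) (F : X → J → ℝ) :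
    ∑ x, ∑ j, inducedKernel pS pXS Pn i x j * F x j =
      ∑ xv : Fin n → X, ∑ jv : Fin n → J,
        (∏ k ∈ univ.erase i, marginalX pS pXS (xv k)) * Pn xv jv * F (xv i) (jv i) := by
  simp only [inducedKernel, sum_mul, ite_mul, zero_mul]
  rw [← sum_comm_cycle, sum_comm]
  refine sum_congr rfl fun xv _ => ?_
  rw [sum_comm_cycle]
  refine sum_congr rfl fun jv _ => ?_
  simp [ite_and]

theorem isKernel_inducedKernel [DecidableEq X] [DecidableEq J] (hpS : IsPMF pS)
    (hpXS : IsKernel pXS) (hPn : IsKernel Pn) (i : Fin n) :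
    IsKernel (inducedKernel pS pXS Pn i) := by
  have hpX := isPMF_marginalX pS pXS hpS hpXS
  refine ⟨fun x j => sum_nonneg fun xv _ => sum_nonneg fun jv _ => ?_, fun x => ?_⟩
  · split_ifs
    · exact mul_nonneg (prod_nonneg fun k _ => hpX.1 _) (hPn.1 xv jv)
    · exact le_rfl
  · calc ∑ j, inducedKernel pS pXS Pn i x j
        = ∑ x', ∑ j, inducedKernel pS pXS Pn i x' j * if x' = x then 1 else 0 := by simp
      _ = ∑ xv : Fin n → X, ∑ jv : Fin n → J, (∏ k ∈ univ.erase i, marginalX pS pXS (xv k)) *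
            Pn xv jv * if xv i = x then 1 else 0 := sum_inducedKernel_mul ..
      _ = ∑ xv : Fin n → X, (∏ k ∈ univ.erase i, marginalX pS pXS (xv k)) *
            if xv i = x then 1 else 0 := by
        simp only [mul_right_comm _ _ (ite _ _ _), ← mul_sum, hPn.2, mul_one]
      _ = 1 := by
        rw [sum_prod_erase_mul_apply _ i fun x' => if x' = x then 1 else 0]
        simp [hpX.2]

theorem Ecost_inducedKernel [DecidableEq X] [DecidableEq J] (i : Fin n) :
    Ecost pS pXS ρ (inducedKernel pS pXS Pn i) = EcostI pS pXS ρ Pn i := by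
  rw [Ecost_eq_sum_mul, sum_inducedKernel_mul, EcostI, ← sum_comm_cycle]
  refine sum_congr rfl fun xv _ => sum_congr rfl fun jv _ => ?_
  rw [← sum_mul, ← sum_mul, ← Fintype.prod_sum fun k s => pS s * pXS s (xv k),
    ← mul_prod_erase univ _ (mem_univ i)]
  simp only [marginalX]
  ring

theorem Edist_inducedKernel [DecidableEq X] [DecidableEq J] (hch : ∀ x, IsKernel (ch x))
    (hdec : IsKernel dec) (i : Fin n) :
    Edist pS pXS ch dec d (inducedKernel pS pXS Pn i) = EdistI pS pXS ch dec d Pn i := by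
  have hout (sv : Fin n → S) (xv : Fin n → X) (jv : Fin n → J) :
      ∑ yv : Fin n → Y, ∑ shv : Fin n → Sh,
          jointProb pS pXS ch dec Pn sv xv jv yv shv * d (sv i) (shv i) =
        (∏ k, pS (sv k) * pXS (sv k) (xv k)) * Pn xv jv *
          letterDistortion ch dec d (sv i) (xv i) (jv i) := by
    simp only [jointProb, mul_assoc, ← mul_sum]
    rw [sum_outputs_eq_letterDistortion ch dec d hch hdec]
  rw [Edist_eq_sum_mul, sum_inducedKernel_mul, EdistI]
  simp only [hout]
  rw [← sum_comm_cycle]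
  refine sum_congr rfl fun xv _ => sum_congr rfl fun jv _ => Eq.symm ?_
  calc ∑ sv : Fin n → S, (∏ k, pS (sv k) * pXS (sv k) (xv k)) * Pn xv jv *
        letterDistortion ch dec d (sv i) (xv i) (jv i)
      = (∑ sv : Fin n → S, (∏ k, pS (sv k) * pXS (sv k) (xv k)) *
          letterDistortion ch dec d (sv i) (xv i) (jv i)) * Pn xv jv := by
        rw [sum_mul]
        exact sum_congr rfl fun _ _ => by ring
    _ = _ := by
        rw [sum_prod_mul_apply (fun k s => pS s * pXS s (xv k)) i
          fun s => letterDistortion ch dec d s (xv i) (jv i)]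
        simp only [distortionWeight, marginalX]
        ring

end Jamming

theorem multiletter_jamming_le_Dfun_general {S X J Y Sh : Type*}
    [Fintype S] [Fintype X] [Fintype J] [Fintype Y] [Fintype Sh]
    (pS : S → ℝ) (pXS : S → X → ℝ) (ch : X → J → Y → ℝ) (dec : Y → Sh → ℝ)
    (d : S → Sh → ℝ) (ρ : J → X → ℝ)
    (hpS : IsPMF pS) (hpXS : IsKernel pXS) (hch : ∀ x, IsKernel (ch x))
    (hdec : IsKernel dec)
    (n : ℕ) (hn : 0 < n) (PJ : ℝ)
    (Pn : (Fin n → X) → (Fin n → J) → ℝ) (hPn : IsKernel Pn)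
    (hcost : ∑ i, EcostI pS pXS ρ Pn i ≤ n * PJ) :
    (1 / n) * ∑ i, EdistI pS pXS ch dec d Pn i ≤ Dfun pS pXS ch dec d ρ PJ := by
  classical
  have : Nonempty (Fin n) := ⟨⟨0, hn⟩⟩
  set q := meanKernel (inducedKernel pS pXS Pn)
  have hq : IsKernel q := IsKernel.meanKernel (isKernel_inducedKernel pS pXS Pn hpS hpXS hPn)
  have hEcost : Ecost pS pXS ρ q = (n : ℝ)⁻¹ * ∑ i, EcostI pS pXS ρ Pn i := by
    simp only [q, Ecost_meanKernel, Ecost_inducedKernel, Fintype.card_fin]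
  have hEdist : Edist pS pXS ch dec d q = (n : ℝ)⁻¹ * ∑ i, EdistI pS pXS ch dec d Pn i := by
    simp only [q, Edist_meanKernel, Edist_inducedKernel pS pXS ch dec d Pn hch hdec,
      Fintype.card_fin]
  have hcost_avg : Ecost pS pXS ρ q ≤ PJ := by
    rw [hEcost, inv_mul_le_iff₀ (Nat.cast_pos.mpr hn)]
    exact hcost
  rw [one_div, ← hEdist]
  exact Edist_le_Dfun pS pXS ch dec d ρ hq hcost_avg

/-- Theorem 2 of the paper: any `n`-letter jamming strategy satisfying the
average cost constraint `n P_J` achieves average per-letter distortion at most `D(P_J)`. -/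
theorem multiletter_jamming_le_Dfun {S X J Y Sh : Type*}
    [Fintype S] [Fintype X] [Fintype J] [Fintype Y] [Fintype Sh]
    (pS : S → ℝ) (pXS : S → X → ℝ) (ch : X → J → Y → ℝ) (dec : Y → Sh → ℝ)
    (d : S → Sh → ℝ) (ρ : J → X → ℝ)
    (hpS : IsPMF pS) (hpXS : IsKernel pXS) (hch : ∀ x, IsKernel (ch x))
    (hdec : IsKernel dec) (hd : ∀ s sh, 0 ≤ d s sh)
    (n : ℕ) (hn : 0 < n) (PJ : ℝ)
    (Pn : (Fin n → X) → (Fin n → J) → ℝ) (hPn : IsKernel Pn)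
    (hcost : ∑ i, EcostI pS pXS ρ Pn i ≤ n * PJ) :
    (1 / n) * ∑ i, EdistI pS pXS ch dec d Pn i ≤ Dfun pS pXS ch dec d ρ PJ :=
  multiletter_jamming_le_Dfun_general pS pXS ch dec d ρ hpS hpXS hch hdec n hn PJ Pn hPn hcost
end

section
/- If the jammer cost function ρ satisfies: ρ(j|x) = c₁·g(x,j) + c₂ whenever q(j|x) > 0, and ρ(j|x) ≥ c₁·g(x,j) + c₂ for all (x,j), where c₁ > 0 and g(x,j) = Σ_{s,y,ŝ} p_S(s) p_{X|S}(x|s) p_{Y|X,J}(y|x,j) p_{Ŝ|Y}(ŝ|y) d(s,ŝ), then the jamming kernel q maximizes expected distortion among all jamming kernels q̃ with expected cost E_{q̃}[ρ(J|X)] ≤ E_q[ρ(J|X)]. -/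
open Finset

/-- The weighted per-(x,j) distortion
`g(x,j) = Σ_{s,y,ŝ} p_S(s) p_{X|S}(x|s) p_{Y|X,J}(y|x,j) p_{Ŝ|Y}(ŝ|y) d(s,ŝ)`,
so that the expected distortion of a jamming kernel `q̃` is `Σ_{x,j} q̃(j|x) g(x,j)`. -/
def gfun {S X J Y Sh : Type*} [Fintype S] [Fintype Y] [Fintype Sh]
    (pS : S → ℝ) (pXS : S → X → ℝ) (ch : X → J → Y → ℝ) (dec : Y → Sh → ℝ)
    (d : S → Sh → ℝ) (x : X) (j : J) : ℝ :=
  ∑ s, ∑ y, ∑ sh, pS s * pXS s x * ch x j y * dec y sh * d s sh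

/-- The expected jammer cost of a kernel `q̃`, with the weighting matching the
distortion weighting. -/
def Jcost {X J : Type*} [Fintype X] [Fintype J]
    (ρ : J → X → ℝ) (q : X → J → ℝ) : ℝ :=
  ∑ x, ∑ j, q x j * ρ j x

/-- if the jammer cost function satisfies `ρ(j|x) = c₁ g(x,j) + c₂`
wherever `q(j|x) > 0` and `ρ(j|x) ≥ c₁ g(x,j) + c₂` everywhere, with `c₁ > 0`, then
the jamming kernel `q` maximizes the expected distortion among all jamming kernels
whose expected cost does not exceed that of `q`. -/
theorem jammer_opt {S X J Y Sh : Type*}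
    [Fintype S] [Fintype X] [Fintype J] [Fintype Y] [Fintype Sh]
    (pS : S → ℝ) (pXS : S → X → ℝ) (ch : X → J → Y → ℝ) (dec : Y → Sh → ℝ)
    (d : S → Sh → ℝ) (ρ : J → X → ℝ) (c₁ c₂ : ℝ) (hc₁ : 0 < c₁)
    (hpS : IsPMF pS) (hpXS : IsKernel pXS) (hch : ∀ x, IsKernel (ch x))
    (hdec : IsKernel dec) (hd : ∀ s sh, 0 ≤ d s sh)
    (q : X → J → ℝ) (hq : IsKernel q)
    (hρeq : ∀ x j, 0 < q x j → ρ j x = c₁ * gfun pS pXS ch dec d x j + c₂)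
    (hρge : ∀ x j, c₁ * gfun pS pXS ch dec d x j + c₂ ≤ ρ j x) :
    ∀ qt : X → J → ℝ, IsKernel qt → Jcost ρ qt ≤ Jcost ρ q →
      ∑ x, ∑ j, qt x j * gfun pS pXS ch dec d x j ≤
        ∑ x, ∑ j, q x j * gfun pS pXS ch dec d x j := by
  intro qt hqt hcost
  set g := gfun pS pXS ch dec d with hgdef
  have key : ∀ (k : X → J → ℝ), IsKernel k →
      ∑ x, ∑ j, k x j * (c₁ * g x j + c₂)
        = c₁ * (∑ x, ∑ j, k x j * g x j) + c₂ * (Fintype.card X : ℝ) := by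
    intro k hk
    have : ∀ x, ∑ j, k x j * (c₁ * g x j + c₂)
        = c₁ * (∑ j, k x j * g x j) + c₂ := by
      intro x
      rw [Finset.mul_sum]
      have h1 : ∑ j, k x j * (c₁ * g x j + c₂)
          = ∑ j, (c₁ * (k x j * g x j) + c₂ * k x j) := by
        apply Finset.sum_congr rfl; intro j _; ring
      have h2 : ∑ j, c₂ * k x j = c₂ := by rw [← Finset.mul_sum, hk.2 x, mul_one]
      rw [h1, Finset.sum_add_distrib, ← Finset.mul_sum, h2]
    simp_rw [this]
    rw [Finset.sum_add_distrib, ← Finset.mul_sum, Finset.sum_const, nsmul_eq_mul,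
      Finset.card_univ]
    ring
  have hqcost : Jcost ρ q = c₁ * (∑ x, ∑ j, q x j * g x j) + c₂ * (Fintype.card X : ℝ) := by
    rw [← key q hq]
    unfold Jcost
    apply Finset.sum_congr rfl; intro x _
    apply Finset.sum_congr rfl; intro j _
    rcases lt_or_eq_of_le (hq.1 x j) with h | h
    · rw [hρeq x j h]
    · rw [← h]; ring
  have hqtcost : c₁ * (∑ x, ∑ j, qt x j * g x j) + c₂ * (Fintype.card X : ℝ) ≤ Jcost ρ qt := by
    rw [← key qt hqt]
    unfold Jcost
    apply Finset.sum_le_sum; intro x _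
    apply Finset.sum_le_sum; intro j _
    exact mul_le_mul_of_nonneg_left (hρge x j) (hqt.1 x j)
  have := hqtcost.trans (hcost.trans_eq hqcost)
  nlinarith [this]
end

section
/- In the binary setting with identity encoder and decoder, for any jamming kernel q : {0,1} → (distribution on {0,1}) with E[J] ≤ P_J ≤ 1/2, the expected Hamming distortion E[d_H(S,Ŝ)] is at most p(1−P_J) + (1−p)P_J, and this bound is achieved by the X-independent kernel J ~ Bern(P_J). -/
open Finset

/-- A probability kernel from `Bool` to `Bool`. -/
def IsBKernel (q : Bool → Bool → ℝ) : Prop :=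
  (∀ x j, 0 ≤ q x j) ∧ ∀ x, q x true + q x false = 1

/-- Hamming distortion on bits. -/
noncomputable def dH (s sh : Bool) : ℝ := if s = sh then 0 else 1

/-- Expected Hamming distortion `E[d_H(S, Ŝ)]` for the binary system with
`S ~ Bern(1/2)`, `X = S`, jamming kernel `q`, independent noise `Z ~ Bern(p)`,
channel output `Y = X ⊕ J ⊕ Z` and decoder `Ŝ = Y`. -/
noncomputable def binDist (p : ℝ) (q : Bool → Bool → ℝ) : ℝ :=
  ∑ s : Bool, ∑ j : Bool, ∑ z : Bool,
    (1 / 2) * q s j * (if z then p else 1 - p) * dH s (xor s (xor j z))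

/-- Expected jammer cost `E[J]` of a jamming kernel `q`. -/
noncomputable def binCost (q : Bool → Bool → ℝ) : ℝ :=
  ∑ x : Bool, (1 / 2) * q x true

/-- in the binary setting with identity encoder and decoder, every jamming
kernel with `E[J] ≤ P_J ≤ 1/2` yields expected Hamming distortion at most
`p(1−P_J) + (1−p)P_J`, and the `X`-independent kernel `J ~ Bern(P_J)` achieves it. -/
theorem binary_jammer_bound (p PJ : ℝ)
    (hp0 : 0 ≤ p) (hp : p ≤ 1 / 2) (hPJ0 : 0 ≤ PJ) (hPJ : PJ ≤ 1 / 2) :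
    (∀ q : Bool → Bool → ℝ, IsBKernel q → binCost q ≤ PJ →
        binDist p q ≤ p * (1 - PJ) + (1 - p) * PJ) ∧
      binDist p (fun _ j => if j then PJ else 1 - PJ) =
        p * (1 - PJ) + (1 - p) * PJ := by
  constructor
  · intro q hq hc
    have h1 := hq.2 true
    have h2 := hq.2 false
    have hc' : (1/2) * q true true + (1/2) * q false true ≤ PJ := by
      simpa [binCost, Fintype.sum_bool] using hc
    simp only [binDist, dH, Fintype.sum_bool]
    norm_num
    nlinarith [hq.1 true true, hq.1 false true]
  · simp only [binDist, dH, Fintype.sum_bool]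
    norm_num
    ring
end
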